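/- arXiv:1901.07834 — 2 statements merged into one kernel-verified Lean document; each statement's English description precedes it below -/
import Mathlib

section
/- Let n ≥ 1, let A be an invertible n×n real matrix, and let ‖·‖ be a consistent matrix norm. For every real b with 2‖A^{-1}‖/(2‖A^{-1}‖+1) ≤ b < 1, the matrix t(A−I)+I is invertible for all t ∈ [b,1], and ‖(A−I) · ∫_b^1 (t(A−I)+I)^{-1} dt‖ ≤ (−log(b) + (1−b)/(2b)) · ‖A−I‖·‖A^{-1}‖. -/
/-!
Put `c = ‖A⁻¹‖`. Since `t(A - I) + I = t(A + sI)` with `s = (1 - t)/t`, and the hypothesis on `b`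
gives `s c ≤ 1/2` on `[b, 1]`, the Banach perturbation lemma makes these matrices invertible with
`‖(t(A - I) + I)⁻¹‖ ≤ c / ((1 + c)t - c)`. A seminorm is attained at any given point by a linear
functional lying below it (Hahn–Banach), so the norm of the integral is at most the integral of
this bound, which is `c/(1 + c) · (-log((1 + c)b - c))`. Writing `(1 + c)b - c = b(1 - u)` with
`u = c(1 - b)/b ≤ 1/2`, the estimate `-log(1 - u) ≤ u + u²` together with `log b ≤ b - 1` turns
this into `c(-log b + (1 - b)/(2b))`.
-/

open MeasureTheory

/-- Entrywise integral of a matrix-valued function over an interval. -/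
noncomputable def entryIntegral {n : ℕ} (f : ℝ → Matrix (Fin n) (Fin n) ℝ) (a b : ℝ) :
    Matrix (Fin n) (Fin n) ℝ :=
  Matrix.of fun i j => ∫ t in a..b, f t i j

open Real

theorem neg_log_one_sub_le_add_sq {u : ℝ} (h0 : 0 ≤ u) (h1 : u ≤ 1 / 2) :
    -log (1 - u) ≤ u + u ^ 2 := by
  have hpos : 0 < 1 - u := by linarith
  have hexp : exp (-(u + u ^ 2)) ≤ 1 - u := by
    rw [exp_neg, inv_le_comm₀ (exp_pos _) hpos]
    calc (1 - u)⁻¹ ≤ 1 + (u + u ^ 2) + (u + u ^ 2) ^ 2 / 2 := by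
          rw [inv_le_iff_one_le_mul₀ hpos]
          nlinarith [pow_le_pow_left₀ h0 h1 2, pow_le_pow_left₀ h0 h1 3]
      _ ≤ exp (u + u ^ 2) := quadratic_le_exp_of_nonneg (by positivity)
  have := log_le_log (exp_pos _) hexp
  rw [log_exp] at this
  linarith

theorem integral_div_mul_sub {a b κ d : ℝ} (c : ℝ) (hκ : κ ≠ 0) (ha : 0 < κ * a - d)
    (hb : 0 < κ * b - d) :
    ∫ t in a..b, c / (κ * t - d) = c / κ * log ((κ * b - d) / (κ * a - d)) := by
  simp_rw [div_eq_mul_inv c]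
  rw [intervalIntegral.integral_const_mul, intervalIntegral.integral_comp_mul_sub (·⁻¹) hκ,
    integral_inv_of_pos ha hb, smul_eq_mul]
  ring

theorem mul_neg_log_le {b c : ℝ} (hc : 0 ≤ c) (hb0 : 0 < b) (hb1 : b ≤ 1)
    (hbc : 2 * c * (1 - b) ≤ b) :
    c / (1 + c) * -log ((1 + c) * b - c) ≤ c * (-log b + (1 - b) / (2 * b)) := by
  set u := c * (1 - b) / b with hu
  have hu0 : 0 ≤ u := div_nonneg (mul_nonneg hc (by linarith)) hb0.le
  have hu_half : u ≤ 1 / 2 := by rw [hu, div_le_iff₀ hb0]; linarith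
  have hub : u * b = c * (1 - b) := div_mul_cancel₀ _ hb0.ne'
  have hsplit : log ((1 + c) * b - c) = log b + log (1 - u) := by
    rw [← log_mul hb0.ne' (by linarith)]
    congr 1
    linarith
  have hlog_b : c * (1 - b) ≤ c * -log b := by
    have := log_le_sub_one_of_pos hb0
    nlinarith
  have hcb : c * ((1 - b) / (2 * b)) = u / 2 := by rw [hu]; ring
  have hub' : u * (1 - b) ≤ (1 - b) / (2 * b) := by
    rw [le_div_iff₀ (by positivity)]
    nlinarith [mul_le_mul_of_nonneg_left hb1 (mul_nonneg hu0 (sub_nonneg.2 hb1))]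
  have hkey : -log b - log (1 - u) ≤ (1 + c) * (-log b + (1 - b) / (2 * b)) := by
    have hu_sq : u ^ 2 ≤ u / 2 := by nlinarith
    linarith [neg_log_one_sub_le_add_sq hu0 hu_half]
  calc c / (1 + c) * -log ((1 + c) * b - c) = c / (1 + c) * (-log b - log (1 - u)) := by
        rw [hsplit]; ring
    _ ≤ c / (1 + c) * ((1 + c) * (-log b + (1 - b) / (2 * b))) := by gcongr
    _ = c * (-log b + (1 - b) / (2 * b)) := by field_simp

theorem ContinuousOn.matrix_inv {ι 𝕜 X : Type*} [Fintype ι] [DecidableEq ι] [NormedField 𝕜]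
    [TopologicalSpace X] {f : X → Matrix ι ι 𝕜} {s : Set X} (hf : ContinuousOn f s)
    (hunit : ∀ x ∈ s, IsUnit (f x)) : ContinuousOn (fun x => (f x)⁻¹) s := fun x hx => by
  refine (continuousAt_matrix_inv _ ?_).comp_continuousWithinAt (hf x hx)
  rw [Ring.inverse_eq_inv']
  exact continuousAt_inv₀ ((Matrix.isUnit_iff_isUnit_det _).1 (hunit x hx)).ne_zero

theorem Seminorm.exists_linearMap_le_eq {E : Type*} [AddCommGroup E] [Module ℝ E]
    (p : Seminorm ℝ E) (x : E) : ∃ g : E →ₗ[ℝ] ℝ, (∀ y, g y ≤ p y) ∧ g x = p x := by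
  have hker : ∀ c : ℝ, c • x = 0 → c • p x = 0 := fun c hc => by
    rcases smul_eq_zero.1 hc with h | h <;> simp [h]
  obtain ⟨g, hg_ext, hg_le⟩ := exists_extension_of_le_sublinear
    (LinearPMap.mkSpanSingleton' x (p x) hker) p
    (fun c hc y => by rw [map_smul_eq_mul, Real.norm_of_nonneg hc.le]) (map_add_le_add p)
    (by
      rintro ⟨_, hy⟩
      obtain ⟨c, rfl⟩ := Submodule.mem_span_singleton.1 hy
      rw [LinearPMap.mkSpanSingleton'_apply, map_smul_eq_mul, smul_eq_mul]
      exact mul_le_mul_of_nonneg_right (Real.le_norm_self c) (apply_nonneg p x))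
  exact ⟨g, hg_le, (hg_ext ⟨x, Submodule.mem_span_singleton_self x⟩).trans
    (LinearPMap.mkSpanSingleton'_apply_self _ _ _ _)⟩

theorem Seminorm.intervalIntegral_le {E : Type*} [NormedAddCommGroup E] [NormedSpace ℝ E]
    [FiniteDimensional ℝ E] (p : Seminorm ℝ E) {f : ℝ → E} {φ : ℝ → ℝ} {a b : ℝ} (hab : a ≤ b)
    (hf : IntervalIntegrable f volume a b) (hφ : IntervalIntegrable φ volume a b)
    (hle : ∀ t ∈ Set.Icc a b, p (f t) ≤ φ t) : p (∫ t in a..b, f t) ≤ ∫ t in a..b, φ t := by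
  obtain ⟨g, hg_le, hg_eq⟩ := p.exists_linearMap_le_eq (∫ t in a..b, f t)
  let G : E →L[ℝ] ℝ := LinearMap.toContinuousLinearMap g
  calc p (∫ t in a..b, f t) = G (∫ t in a..b, f t) := hg_eq.symm
    _ = ∫ t in a..b, G (f t) := (G.intervalIntegral_comp_comm hf).symm
    _ ≤ ∫ t in a..b, φ t := intervalIntegral.integral_mono_on hab
        ⟨G.integrable_comp hf.1, G.integrable_comp hf.2⟩ hφ
        fun t ht => (hg_le (f t)).trans (hle t ht)

/- Matrices carry no global norm, so the Bochner integral is taken in the sup-normed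
`Fin n → Fin n → ℝ`. -/
theorem entryIntegral_eq_of_intervalIntegrable {n : ℕ} {f : ℝ → Matrix (Fin n) (Fin n) ℝ}
    {a b : ℝ} (hf : IntervalIntegrable (fun t => Matrix.of.symm (f t)) volume a b) :
    entryIntegral f a b = Matrix.of (∫ t in a..b, Matrix.of.symm (f t)) := by
  ext i j
  exact (LinearMap.toContinuousLinearMap ((Matrix.entryLinearMap ℝ ℝ i j).comp
    (Matrix.ofLinearEquiv ℝ).toLinearMap)).intervalIntegral_comp_comm hf

theorem Seminorm.entryIntegral_le {n : ℕ} (p : Seminorm ℝ (Matrix (Fin n) (Fin n) ℝ))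
    {f : ℝ → Matrix (Fin n) (Fin n) ℝ} {φ : ℝ → ℝ} {a b : ℝ} (hab : a ≤ b)
    (hf : ContinuousOn f (Set.Icc a b)) (hφ : IntervalIntegrable φ volume a b)
    (hle : ∀ t ∈ Set.Icc a b, p (f t) ≤ φ t) : p (entryIntegral f a b) ≤ ∫ t in a..b, φ t := by
  have hf' : IntervalIntegrable (fun t => Matrix.of.symm (f t)) volume a b :=
    ContinuousOn.intervalIntegrable_of_Icc hab hf
  rw [entryIntegral_eq_of_intervalIntegrable hf']
  exact (p.comp (Matrix.ofLinearEquiv ℝ).toLinearMap).intervalIntegral_le hab hf' hφ hle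

theorem smul_sub_one_add_one_eq_smul {R : Type*} [Ring R] [Module ℝ R] (a : R) {t : ℝ}
    (ht : t ≠ 0) : t • (a - 1) + 1 = t • (a + ((1 - t) / t) • 1) := by
  rw [smul_add, smul_smul, mul_div_cancel₀ _ ht, smul_sub, sub_smul, one_smul]
  abel

namespace Seminorm

variable {ι 𝕜 : Type*} [Fintype ι] [DecidableEq ι] [NormedField 𝕜]

theorem isUnit_one_add_of_lt_one (p : Seminorm 𝕜 (Matrix ι ι 𝕜)) (hp : ∀ X, p X = 0 → X = 0)
    (hmul : ∀ X Y, p (X * Y) ≤ p X * p Y) {M : Matrix ι ι 𝕜} (hM : p M < 1) :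
    IsUnit (1 + M) := by
  by_contra h
  rw [Matrix.isUnit_iff_isUnit_det, isUnit_iff_ne_zero, not_not] at h
  obtain ⟨v, hv, hMv⟩ := Matrix.exists_mulVec_eq_zero_iff.2 h
  obtain ⟨i, -⟩ := Function.ne_iff.1 hv
  have : Nonempty ι := ⟨i⟩
  set V := Matrix.replicateCol ι v
  have hV : V ≠ 0 := by simpa [V] using hv
  have hMV : M * V = -V := by
    have : (1 + M) * V = 0 := by rw [← Matrix.replicateCol_mulVec, hMv, Matrix.replicateCol_zero]
    rw [add_mul, one_mul] at this
    exact eq_neg_of_add_eq_zero_right this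
  have hpV : 0 < p V := (apply_nonneg p V).lt_of_ne' fun h => hV (hp V h)
  have : p V ≤ p M * p V := by simpa [hMV] using hmul M V
  nlinarith

theorem isUnit_add_smul_one (p : Seminorm 𝕜 (Matrix ι ι 𝕜)) (hp : ∀ X, p X = 0 → X = 0)
    (hmul : ∀ X Y, p (X * Y) ≤ p X * p Y) {A : Matrix ι ι 𝕜} (hA : IsUnit A) {s : 𝕜}
    (hs : ‖s‖ * p A⁻¹ < 1) :
    IsUnit (A + s • 1) := by
  have hAA : A * A⁻¹ = 1 := A.mul_nonsing_inv ((Matrix.isUnit_iff_isUnit_det A).1 hA)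
  have hsmall : p (s • A⁻¹) < 1 := by rwa [map_smul_eq_mul]
  have : A + s • 1 = A * (1 + s • A⁻¹) := by rw [mul_add, mul_one, Matrix.mul_smul, hAA]
  exact this ▸ hA.mul (p.isUnit_one_add_of_lt_one hp hmul hsmall)

theorem inv_add_smul_one_le (p : Seminorm 𝕜 (Matrix ι ι 𝕜)) (hp : ∀ X, p X = 0 → X = 0)
    (hmul : ∀ X Y, p (X * Y) ≤ p X * p Y) {A : Matrix ι ι 𝕜} (hA : IsUnit A) {s : 𝕜}
    (hs : ‖s‖ * p A⁻¹ < 1) :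
    p (A + s • 1)⁻¹ ≤ p A⁻¹ / (1 - ‖s‖ * p A⁻¹) := by
  set X := (A + s • 1)⁻¹
  have hX : (A + s • 1) * X = 1 := Matrix.mul_nonsing_inv _
    ((Matrix.isUnit_iff_isUnit_det _).1 (p.isUnit_add_smul_one hp hmul hA hs))
  have hA'A : A⁻¹ * A = 1 := A.nonsing_inv_mul ((Matrix.isUnit_iff_isUnit_det A).1 hA)
  have hXeq : X = A⁻¹ - s • (A⁻¹ * X) := by
    have := congrArg (A⁻¹ * ·) hX
    simp only [mul_add, add_mul, ← mul_assoc, hA'A, one_mul, mul_one, Matrix.mul_smul,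
      Matrix.smul_mul] at this
    exact eq_sub_of_add_eq this
  have hle : p X ≤ p A⁻¹ + ‖s‖ * (p A⁻¹ * p X) := by
    calc p X = p (A⁻¹ - s • (A⁻¹ * X)) := congrArg p hXeq
      _ ≤ p A⁻¹ + p (s • (A⁻¹ * X)) := map_sub_le_add p _ _
      _ ≤ p A⁻¹ + ‖s‖ * (p A⁻¹ * p X) := by
        rw [map_smul_eq_mul]
        gcongr
        exact hmul _ _
  rw [le_div_iff₀ (by linarith)]
  nlinarith

theorem isUnit_smul_sub_one_add_one_and_inv_le (p : Seminorm ℝ (Matrix ι ι ℝ))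
    (hp : ∀ X, p X = 0 → X = 0) (hmul : ∀ X Y, p (X * Y) ≤ p X * p Y) {A : Matrix ι ι ℝ}
    (hA : IsUnit A) {t : ℝ} (ht0 : 0 < t) (ht1 : t ≤ 1) (htc : (1 - t) * p A⁻¹ < t) :
    IsUnit (t • (A - 1) + 1) ∧
      p (t • (A - 1) + 1)⁻¹ ≤ p A⁻¹ / ((1 + p A⁻¹) * t - p A⁻¹) := by
  have hs : ‖(1 - t) / t‖ * p A⁻¹ < 1 := by
    rwa [Real.norm_of_nonneg (div_nonneg (by linarith) ht0.le), div_mul_eq_mul_div, div_lt_one ht0]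
  have hY := p.isUnit_add_smul_one hp hmul hA hs
  have hYdet := (Matrix.isUnit_iff_isUnit_det _).1 hY
  rw [smul_sub_one_add_one_eq_smul A ht0.ne']
  refine ⟨hY.smul (Units.mk0 t ht0.ne'), ?_⟩
  have hinv : (t • (A + ((1 - t) / t) • 1))⁻¹ = t⁻¹ • (A + ((1 - t) / t) • 1)⁻¹ :=
    Matrix.inv_eq_left_inv (by
      rw [Matrix.smul_mul, Matrix.mul_smul, Matrix.nonsing_inv_mul _ hYdet, smul_smul,
        inv_mul_cancel₀ ht0.ne', one_smul])
  calc p (t • (A + ((1 - t) / t) • 1))⁻¹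
      = t⁻¹ * p (A + ((1 - t) / t) • 1)⁻¹ := by
        rw [hinv, map_smul_eq_mul, Real.norm_of_nonneg (inv_nonneg.2 ht0.le)]
    _ ≤ t⁻¹ * (p A⁻¹ / (1 - ‖(1 - t) / t‖ * p A⁻¹)) := by
        gcongr
        exact p.inv_add_smul_one_le hp hmul hA hs
    _ = p A⁻¹ / ((1 + p A⁻¹) * t - p A⁻¹) := by
        rw [Real.norm_of_nonneg (div_nonneg (by linarith) ht0.le)]
        field_simp
        ring

end Seminorm

/-- Lemma 2.2: right-endpoint truncation bound. -/
theorem stmt_2 {n : ℕ} (hn : 1 ≤ n) (A : Matrix (Fin n) (Fin n) ℝ) (hA : IsUnit A)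
    (N : Matrix (Fin n) (Fin n) ℝ → ℝ)
    (hN_def : ∀ X, N X = 0 ↔ X = 0)
    (hN_add : ∀ X Y, N (X + Y) ≤ N X + N Y)
    (hN_smul : ∀ (c : ℝ) (X), N (c • X) = |c| * N X)
    (hN_mul : ∀ X Y, N (X * Y) ≤ N X * N Y)
    (b : ℝ) (hb1 : 2 * N A⁻¹ / (2 * N A⁻¹ + 1) ≤ b) (hb2 : b < 1) :
    (∀ t ∈ Set.Icc b 1, IsUnit (t • (A - 1) + 1)) ∧
      N ((A - 1) * entryIntegral (fun t => (t • (A - 1) + 1)⁻¹) b 1) ≤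
        (-Real.log b + (1 - b) / (2 * b)) * (N (A - 1) * N A⁻¹) := by
  let p : Seminorm ℝ (Matrix (Fin n) (Fin n) ℝ) :=
    Seminorm.of N hN_add fun c X => by rw [hN_smul, Real.norm_eq_abs]
  have hp : ∀ X, p X = 0 → X = 0 := fun X => (hN_def X).1
  set c := N A⁻¹
  have hc : 0 < c := by
    have : Nonempty (Fin n) := ⟨⟨0, hn⟩⟩
    have hA_inv : A⁻¹ ≠ 0 := (Matrix.isUnit_nonsing_inv_iff.2 hA).ne_zero
    exact (apply_nonneg p A⁻¹).lt_of_ne' fun h => hA_inv (hp _ h)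
  have hb0 : 0 < b := lt_of_lt_of_le (by positivity) hb1
  have hbc : 2 * c * (1 - b) ≤ b := by
    rw [div_le_iff₀ (by positivity)] at hb1
    linarith
  have hden : ∀ t ∈ Set.Icc b 1, 0 < (1 + c) * t - c := fun t ht => by nlinarith [ht.1]
  have hF : ∀ t ∈ Set.Icc b 1,
      IsUnit (t • (A - 1) + 1) ∧ N (t • (A - 1) + 1)⁻¹ ≤ c / ((1 + c) * t - c) :=
    fun t ht => p.isUnit_smul_sub_one_add_one_and_inv_le hp hN_mul hA (hb0.trans_le ht.1) ht.2
      (show (1 - t) * c < t by linarith [hden t ht])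
  refine ⟨fun t ht => (hF t ht).1, ?_⟩
  have hF_cont : ContinuousOn (fun t : ℝ => (t • (A - 1) + 1)⁻¹) (Set.Icc b 1) :=
    ContinuousOn.matrix_inv (by fun_prop) fun t ht => (hF t ht).1
  have hφ : IntervalIntegrable (fun t => c / ((1 + c) * t - c)) volume b 1 :=
    ContinuousOn.intervalIntegrable_of_Icc hb2.le
      (continuousOn_const.div (by fun_prop) fun t ht => (hden t ht).ne')
  calc N ((A - 1) * entryIntegral (fun t => (t • (A - 1) + 1)⁻¹) b 1)
      ≤ N (A - 1) * N (entryIntegral (fun t => (t • (A - 1) + 1)⁻¹) b 1) := hN_mul _ _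
    _ ≤ N (A - 1) * ∫ t in b..1, c / ((1 + c) * t - c) :=
        mul_le_mul_of_nonneg_left (p.entryIntegral_le hb2.le hF_cont hφ fun t ht => (hF t ht).2)
          (apply_nonneg p _)
    _ = N (A - 1) * (c / (1 + c) * -log ((1 + c) * b - c)) := by
        rw [integral_div_mul_sub c (by positivity) (hden b ⟨le_rfl, hb2.le⟩)
          (hden 1 ⟨hb2.le, le_rfl⟩), mul_one, add_sub_cancel_right, one_div, log_inv]
    _ ≤ N (A - 1) * (c * (-log b + (1 - b) / (2 * b))) :=
        mul_le_mul_of_nonneg_left (mul_neg_log_le hc.le hb0 hb2.le hbc) (apply_nonneg p _)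
    _ = (-log b + (1 - b) / (2 * b)) * (N (A - 1) * c) := by ring
end

section
/- Let n ≥ 1, let A be an n×n real matrix whose complex eigenvalues all lie in ℂ∖(−∞,0], let l ∈ ℝ, and set a = (tanh(sinh(l))+1)/2 ∈ (0,1). Then the improper integral ∫_{-∞}^{l} F_DE(x) dx exists and equals ∫_0^a (t(A−I)+I)^{-1} dt, where F_DE(x) := cosh(x)·sech²(sinh(x))·[(1+tanh(sinh(x)))(A−I)+2I]^{-1}. -/
open MeasureTheory

/-- The integrand of the double exponential transformation. -/
noncomputable def FDE {n : ℕ} (A : Matrix (Fin n) (Fin n) ℝ) (x : ℝ) :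
    Matrix (Fin n) (Fin n) ℝ :=
  (Real.cosh x * (1 / Real.cosh (Real.sinh x)) ^ 2) •
    ((1 + Real.tanh (Real.sinh x)) • (A - 1) + (2 : Matrix (Fin n) (Fin n) ℝ))⁻¹

/-!
The substitution `t = deMap x = (tanh (sinh x) + 1) / 2` maps `(-∞, l]` increasingly onto
`(0, a]`, and after pulling the factor `2` out of the inverse, `FDE A x` is exactly
`deMapDeriv x • (deMap x • (A - 1) + 1)⁻¹`; so the claim is the one-dimensional change of variables
formula, applied entrywise. Its hypothesis, integrability of `t ↦ (t • (A - 1) + 1)⁻¹` on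
`(0, a]`, holds by continuity on `[0, a]`: for `0 < t < 1`, a singular `t • (A - 1) + 1` would
put the nonpositive real `(t - 1) / t` in the spectrum of `A`.
-/

open Set Real

theorem Real.hasDerivAt_tanh (x : ℝ) : HasDerivAt tanh ((1 / cosh x) ^ 2) x := by
  have h := (hasDerivAt_sinh x).div (hasDerivAt_cosh x) (cosh_pos x).ne'
  rw [show sinh / cosh = tanh from funext fun y => (tanh_eq_sinh_div_cosh y).symm] at h
  refine h.congr_deriv ?_
  rw [← sq, ← sq, cosh_sq_sub_sinh_sq, one_div, one_div, inv_pow]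

noncomputable def deMap (x : ℝ) : ℝ := (tanh (sinh x) + 1) / 2

noncomputable def deMapDeriv (x : ℝ) : ℝ := cosh x * (1 / cosh (sinh x)) ^ 2 / 2

theorem hasDerivAt_deMap (x : ℝ) : HasDerivAt deMap (deMapDeriv x) x := by
  have h := (((hasDerivAt_tanh (sinh x)).comp x (hasDerivAt_sinh x)).add_const 1).div_const 2
  exact h.congr_deriv (by rw [deMapDeriv]; ring)

theorem deMapDeriv_pos (x : ℝ) : 0 < deMapDeriv x := by
  have := cosh_pos x
  have := cosh_pos (sinh x)
  unfold deMapDeriv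
  positivity

theorem strictMono_deMap : StrictMono deMap :=
  strictMono_of_hasDerivAt_pos hasDerivAt_deMap deMapDeriv_pos

theorem deMap_mem_Ioo (x : ℝ) : deMap x ∈ Ioo 0 1 := by
  have := neg_one_lt_tanh (sinh x)
  have := tanh_lt_one (sinh x)
  constructor <;> unfold deMap <;> linarith

theorem image_deMap_Iic (l : ℝ) : deMap '' Iic l = Ioc 0 (deMap l) := by
  ext t
  constructor
  · rintro ⟨x, hx, rfl⟩
    exact ⟨(deMap_mem_Ioo x).1, strictMono_deMap.monotone hx⟩
  · rintro ⟨ht0, htl⟩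
    have ht1 : 2 * t - 1 ∈ Ioo (-1) 1 := ⟨by linarith, by linarith [(deMap_mem_Ioo l).2]⟩
    have hinv : deMap (arsinh (artanh (2 * t - 1))) = t := by
      rw [deMap, sinh_arsinh, tanh_artanh ht1]
      ring
    exact ⟨_, strictMono_deMap.le_iff_le.mp (by rwa [hinv]), hinv⟩

section ChangeOfVariables

variable {E : Type*} [NormedAddCommGroup E] [NormedSpace ℝ E] {g : ℝ → E} (l : ℝ)

theorem integrableOn_Iic_deMapDeriv_smul_iff :
    IntegrableOn (fun x => deMapDeriv x • g (deMap x)) (Iic l) ↔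
      IntegrableOn g (Ioc 0 (deMap l)) := by
  rw [← image_deMap_Iic, integrableOn_image_iff_integrableOn_deriv_smul_of_monotoneOn
    measurableSet_Iic (fun x _ => (hasDerivAt_deMap x).hasDerivWithinAt)
    (strictMono_deMap.monotone.monotoneOn _)]

theorem integral_Iic_deMapDeriv_smul :
    ∫ x in Iic l, deMapDeriv x • g (deMap x) = ∫ t in 0..deMap l, g t := by
  rw [intervalIntegral.integral_of_le (deMap_mem_Ioo l).1.le, ← image_deMap_Iic,
    integral_image_eq_integral_deriv_smul_of_monotoneOn measurableSet_Iic
      (fun x _ => (hasDerivAt_deMap x).hasDerivWithinAt) (strictMono_deMap.monotone.monotoneOn _)]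

end ChangeOfVariables

theorem isUnit_smul_sub_one_add_one {R : Type*} [Ring R] [Algebra ℝ R] {a : R}
    (ha : ∀ r ∈ spectrum ℝ a, 0 < r) {t : ℝ} (ht : t ∈ Ico 0 1) : IsUnit (t • (a - 1) + 1) := by
  obtain ⟨ht0, ht1⟩ := ht
  rcases ht0.eq_or_lt with rfl | htpos
  · simp
  by_contra hnot
  have hmem : (t - 1) / t ∈ spectrum ℝ a := by
    rw [spectrum.mem_iff]
    intro hu
    have hscaled : t • (a - 1) + 1 = algebraMap ℝ R (-t) * (algebraMap ℝ R ((t - 1) / t) - a) := by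
      rw [mul_sub, ← map_mul, ← Algebra.smul_def, Algebra.algebraMap_eq_smul_one]
      match_scalars
      · field_simp
      · field_simp
        ring
    exact hnot (hscaled ▸ ((isUnit_iff_ne_zero.mpr (neg_ne_zero.mpr htpos.ne')).map _).mul hu)
  exact (div_neg_of_neg_of_pos (by linarith) htpos).not_gt (ha _ hmem)

theorem Matrix.mem_spectrum_map_algebraMap {m K L : Type*} [Fintype m] [DecidableEq m]
    [Field K] [Field L] [Algebra K L] {A : Matrix m m K} {r : K} (hr : r ∈ spectrum K A) :
    algebraMap K L r ∈ spectrum L (A.map (algebraMap K L)) := by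
  rw [mem_spectrum_iff_isRoot_charpoly] at hr ⊢
  rw [charpoly_map]
  exact hr.map

theorem continuousOn_inv_smul_sub_one_add_one_apply {m : Type*} [Fintype m] [DecidableEq m]
    (A : Matrix m m ℝ) {s : Set ℝ} (hs : ∀ t ∈ s, IsUnit (t • (A - 1) + 1)) (i j : m) :
    ContinuousOn (fun t : ℝ => (t • (A - 1) + 1)⁻¹ i j) s := by
  intro t ht
  have hinv : ContinuousAt Inv.inv (t • (A - 1) + 1) := by
    refine continuousAt_matrix_inv _ ?_
    rw [Ring.inverse_eq_inv']
    exact continuousAt_inv₀ ((Matrix.isUnit_iff_isUnit_det _).mp (hs t ht)).ne_zero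
  have hpath : Continuous fun t : ℝ => t • (A - 1) + 1 := by fun_prop
  exact ((continuous_id.matrix_elem i j).continuousAt.comp
    (hinv.comp (f := fun t : ℝ => t • (A - 1) + 1) hpath.continuousAt)).continuousWithinAt

theorem FDE_eq_deMapDeriv_smul {n : ℕ} (A : Matrix (Fin n) (Fin n) ℝ) (x : ℝ)
    (hx : IsUnit (deMap x • (A - 1) + 1)) :
    FDE A x = deMapDeriv x • (deMap x • (A - 1) + 1)⁻¹ := by
  have htwice : (1 + tanh (sinh x)) • (A - 1) + 2 = (2 : ℝ) • (deMap x • (A - 1) + 1) := by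
    rw [smul_add, smul_smul, deMap, two_smul ℝ (1 : Matrix _ _ ℝ), one_add_one_eq_two]
    ring_nf
  rw [FDE, htwice, Matrix.inv_smul _ (2 : ℝ) ((Matrix.isUnit_iff_isUnit_det _).mp hx), smul_smul,
    deMapDeriv]
  simp [div_eq_mul_inv]

theorem stmt_12_general {n : ℕ} (A : Matrix (Fin n) (Fin n) ℝ)
    (hspec : ∀ μ ∈ spectrum ℂ (A.map fun x => (x : ℂ)), ¬(μ.im = 0 ∧ μ.re ≤ 0))
    (l : ℝ) (a : ℝ) (hadef : a = (Real.tanh (Real.sinh l) + 1) / 2) :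
    (∀ i j, IntegrableOn (fun x => FDE A x i j) (Set.Iic l)) ∧
      (Matrix.of fun i j => ∫ x in Set.Iic l, FDE A x i j) =
        entryIntegral (fun t => (t • (A - 1) + 1)⁻¹) 0 a := by
  obtain rfl : a = deMap l := hadef
  have hspec_real : ∀ r ∈ spectrum ℝ A, 0 < r := by
    intro r hr
    have := hspec _ (Complex.coe_algebraMap ▸ Matrix.mem_spectrum_map_algebraMap (L := ℂ) hr)
    simpa using this
  have hunit (t : ℝ) (ht : t ∈ Ico 0 1) : IsUnit (t • (A - 1) + 1) :=
    isUnit_smul_sub_one_add_one hspec_real ht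
  have hFDE (i j) : (fun x => FDE A x i j) =
      fun x => deMapDeriv x • (deMap x • (A - 1) + 1)⁻¹ i j := by
    ext x
    rw [FDE_eq_deMapDeriv_smul A x (hunit _ (Ioo_subset_Ico_self (deMap_mem_Ioo x)))]
    rfl
  have hint (i j) : IntegrableOn (fun t => (t • (A - 1) + 1)⁻¹ i j) (Ioc 0 (deMap l)) :=
    ((continuousOn_inv_smul_sub_one_add_one_apply A (fun t ht => hunit t
      ⟨ht.1, ht.2.trans_lt (deMap_mem_Ioo l).2⟩) i j).integrableOn_compact
      isCompact_Icc).mono_set Ioc_subset_Icc_self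
  refine ⟨fun i j => ?_, ?_⟩
  · rw [hFDE]
    exact (integrableOn_Iic_deMapDeriv_smul_iff l).mpr (hint i j)
  · ext i j
    rw [Matrix.of_apply, hFDE]
    exact integral_Iic_deMapDeriv_smul (g := fun t => (t • (A - 1) + 1)⁻¹ i j) l

/-- Left tail of the DE integral equals the left-endpoint truncation of the standard
integral representation. -/
theorem stmt_12 {n : ℕ} (hn : 1 ≤ n) (A : Matrix (Fin n) (Fin n) ℝ)
    (hspec : ∀ μ ∈ spectrum ℂ (A.map fun x => (x : ℂ)), ¬(μ.im = 0 ∧ μ.re ≤ 0))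
    (l : ℝ) (a : ℝ) (hadef : a = (Real.tanh (Real.sinh l) + 1) / 2) :
    (∀ i j, IntegrableOn (fun x => FDE A x i j) (Set.Iic l)) ∧
      (Matrix.of fun i j => ∫ x in Set.Iic l, FDE A x i j) =
        entryIntegral (fun t => (t • (A - 1) + 1)⁻¹) 0 a :=
  stmt_12_general A hspec l a hadef
end
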